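/- In a fair valuation structure, if α = α ⊕ β ⊕ γ, α' ≽ α, and γ' ≼ γ, then α' = α' ⊕ β ⊕ γ'. -/

import Mathlib

/-! Writing `α' = (α' ⊖ α) ⊕ α` by the fair-difference axiom, associativity transfers the
absorption of `β ⊕ γ` from `α` to `α'`; absorption also passes to the smaller summand
`β ⊕ γ'` because `⊕` is monotone and increasing. -/

structure FairVS (E : Type*) [LinearOrder E] where
  op : E → E → E
  bot : E
  top : E
  bot_le : ∀ a : E, bot ≤ a
  le_top : ∀ a : E, a ≤ top
  comm : ∀ a b : E, op a b = op b a
  assoc : ∀ a b c : E, op (op a b) c = op a (op b c)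
  iden : ∀ a : E, op a bot = a
  mono : ∀ a b c : E, b ≤ a → op b c ≤ op a c
  absorb : ∀ a : E, op a top = top
  sub : E → E → E
  sub_add : ∀ a b : E, a ≤ b → op (sub b a) a = b
  sub_max : ∀ a b g : E, a ≤ b → op g a = b → g ≤ sub b a

namespace FairVS

variable {E : Type*} [LinearOrder E] (S : FairVS E)

theorem op_le_op_left {b c : E} (a : E) (h : b ≤ c) : S.op a b ≤ S.op a c := by
  rw [S.comm a b, S.comm a c]
  exact S.mono c b a h

theorem le_op_right (a b : E) : a ≤ S.op a b :=
  calc a = S.op a S.bot := (S.iden a).symm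
    _ ≤ S.op a b := S.op_le_op_left a (S.bot_le b)

theorem op_eq_self_of_le_left {a a' b : E} (h : S.op a b = a) (ha : a ≤ a') :
    S.op a' b = a' :=
  calc S.op a' b = S.op (S.op (S.sub a' a) a) b := by rw [S.sub_add a a' ha]
    _ = S.op (S.sub a' a) (S.op a b) := S.assoc _ _ _
    _ = a' := by rw [h, S.sub_add a a' ha]

theorem op_eq_self_of_le_right {a b b' : E} (h : S.op a b = a) (hb : b' ≤ b) :
    S.op a b' = a :=
  le_antisymm ((S.op_le_op_left a hb).trans h.le) (S.le_op_right a b')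

end FairVS

theorem stmt12 {E : Type*} [LinearOrder E] (S : FairVS E) (α β γ α' γ' : E)
    (h : α = S.op (S.op α β) γ) (hα : α ≤ α') (hγ : γ' ≤ γ) :
    α' = S.op (S.op α' β) γ' := by
  have hβγ : S.op α (S.op β γ) = α := by rw [← S.assoc, ← h]
  have hβγ' : S.op α (S.op β γ') = α :=
    S.op_eq_self_of_le_right hβγ (S.op_le_op_left β hγ)
  rw [S.assoc, S.op_eq_self_of_le_left hβγ' hα]
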